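/- arXiv:2207.08043 — 7 statements merged into one kernel-verified Lean document; each statement's English description precedes it below -/
import Mathlib

section
/- Let n ≥ 1 and let x_1 ≤ x_2 ≤ … ≤ x_n be points in [0,1]. For x ∈ [0,1], let y_1 ≤ … ≤ y_{n+1} denote the nondecreasing rearrangement of {x_1,…,x_n,x}. Then the function x ↦ (n+1)²·W₂²((1/(n+1))∑_{k=1}^{n+1} δ_{y_k}, dx) − F(x) is constant on [0,1], where F(x) = (n+1)x² − x − 2∑_{k=1}^{n} max{x, x_k}. Consequently, a point x ∈ [0,1] minimizes the squared Wasserstein distance of the augmented empirical measure to Lebesgue measure on [0,1] if and only if it minimizes the Kritzinger functional F. -/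
/-!
For sorted points `a₀ ≤ … ≤ a_{m-1}`, integrating each cell gives
`m² W₂² = m²/3 - ∑ (2i+1) aᵢ + m ∑ aᵢ²`. The weighted sum `∑ (2i+1) aᵢ` equals
`∑_{i,j} max aᵢ aⱼ`, which depends only on the multiset of points. Inserting `x` into
the multiset `{x₁, …, xₙ}` therefore adds `x + 2 ∑ max x xₖ` to it and `x²` to `∑ aᵢ²`, so
`(n+1)² W₂² - F(x)` does not depend on `x`.
-/

/-- The squared Wasserstein-2 distance between the empirical measure of the
(sorted) points `a 0 ≤ a 1 ≤ … ≤ a (m-1)` and Lebesgue measure on `[0,1]`,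
via the formula `∑_{i=1}^m ∫_{(i-1)/m}^{i/m} (x - a_i)^2 dx`. -/
noncomputable def W2sq (m : ℕ) (a : Fin m → ℝ) : ℝ :=
  ∑ i : Fin m, ∫ t in ((i : ℕ) : ℝ) / m..(((i : ℕ) : ℝ) + 1) / m, (t - a i) ^ 2

/-- `y` is the nondecreasing rearrangement of the multiset `s`. -/
def IsSortedRearrangement {m : ℕ} (y : Fin m → ℝ) (s : Multiset ℝ) : Prop :=
  Monotone y ∧ (↑(List.ofFn y) : Multiset ℝ) = s

open Finset

theorem Fin.sum_sum_apply_max {M : Type*} [AddCommMonoid M] {m : ℕ} (f : Fin m → M) :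
    ∑ i, ∑ j, f (max i j) = ∑ i : Fin m, (2 * i.val + 1) • f i := by
  induction m with
  | zero => simp
  | succ m ih =>
    have row_castSucc (i : Fin m) :
        ∑ j, f (max i.castSucc j) = ∑ j, (f ∘ Fin.castSucc) (max i j) + f (Fin.last m) := by
      simp only [Fin.sum_univ_castSucc (n := m), Function.comp_apply, max_eq_right (Fin.le_last _),
        Fin.strictMono_castSucc.monotone.map_max]
    have row_last : ∑ j, f (max (Fin.last m) j) = (m + 1) • f (Fin.last m) := by
      simp [max_eq_left (Fin.le_last _)]
    rw [Fin.sum_univ_castSucc (fun i => ∑ j, f (max i j)), row_last,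
      sum_congr rfl fun i _ => row_castSucc i, sum_add_distrib, ih (f ∘ Fin.castSucc), sum_const,
      Fin.sum_univ_castSucc]
    simp only [Function.comp_apply, Fin.val_castSucc, Fin.val_last, add_assoc, ← add_nsmul]
    congr 2
    omega

theorem Multiset.sum_map_coe_ofFn {α β : Type*} [AddCommMonoid β] {m : ℕ} (y : Fin m → α)
    (g : α → β) : ((↑(List.ofFn y) : Multiset α).map g).sum = ∑ i, g (y i) := by
  rw [← Fin.univ_val_map, Multiset.map_map]
  rfl

section PairwiseMax

variable {α : Type*} [LinearOrder α] [AddCommMonoid α]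

def pairwiseMaxSum (s : Multiset α) : α :=
  (s.map fun a => (s.map (max a)).sum).sum

theorem pairwiseMaxSum_cons (x : α) (s : Multiset α) :
    pairwiseMaxSum (x ::ₘ s) = x + 2 • (s.map (max x)).sum + pairwiseMaxSum s := by
  have hcomm : s.map (fun a => max a x) = s.map (max x) :=
    Multiset.map_congr rfl fun a _ => max_comm a x
  simp only [pairwiseMaxSum, Multiset.map_cons, Multiset.sum_cons, max_self, Multiset.sum_map_add,
    hcomm]
  abel

theorem pairwiseMaxSum_ofFn {m : ℕ} {y : Fin m → α} (hy : Monotone y) :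
    pairwiseMaxSum (↑(List.ofFn y) : Multiset α) = ∑ i : Fin m, (2 * i.val + 1) • y i := by
  simp only [pairwiseMaxSum, Multiset.sum_map_coe_ofFn, ← hy.map_max, Fin.sum_sum_apply_max]

end PairwiseMax

theorem IsSortedRearrangement.sum_comp {m : ℕ} {y : Fin m → ℝ} {s : Multiset ℝ}
    (hy : IsSortedRearrangement y s) (g : ℝ → ℝ) : ∑ i, g (y i) = (s.map g).sum := by
  rw [← hy.2, Multiset.sum_map_coe_ofFn]

theorem IsSortedRearrangement.pairwiseMaxSum_eq {m : ℕ} {y : Fin m → ℝ} {s : Multiset ℝ}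
    (hy : IsSortedRearrangement y s) :
    pairwiseMaxSum s = ∑ i : Fin m, (2 * (i : ℝ) + 1) * y i := by
  rw [← hy.2, pairwiseMaxSum_ofFn hy.1]
  push_cast [nsmul_eq_mul]
  rfl

theorem exists_isSortedRearrangement {m : ℕ} (s : Multiset ℝ) (hs : Multiset.card s = m) :
    ∃ y : Fin m → ℝ, IsSortedRearrangement y s := by
  set l := s.sort (· ≤ ·)
  have hl : l.length = m := by rw [Multiset.length_sort, hs]
  have hofn : List.ofFn (fun i : Fin m => l.get (i.cast hl.symm)) = l :=
    (List.ofFn_congr hl l.get).symm.trans (List.ofFn_get l)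
  refine ⟨fun i => l.get (i.cast hl.symm), ?_, ?_⟩
  · rw [← List.sortedLE_ofFn_iff, hofn, List.sortedLE_iff_pairwise]
    exact s.pairwise_sort _
  · rw [hofn]
    exact s.sort_eq _

theorem integral_sub_sq (u v c : ℝ) :
    ∫ t in u..v, (t - c) ^ 2 = ((v - c) ^ 3 - (u - c) ^ 3) / 3 := by
  rw [intervalIntegral.integral_comp_sub_right (· ^ 2) c, integral_pow]
  norm_num

theorem sq_mul_W2sq (m : ℕ) (a : Fin m → ℝ) :
    (m : ℝ) ^ 2 * W2sq m a = (m : ℝ) ^ 2 / 3 - ∑ i : Fin m, (2 * (i : ℝ) + 1) * a i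
      + m * ∑ i, a i ^ 2 := by
  obtain rfl | hm := eq_or_ne m 0
  · simp
  have cube_telescope : ∑ i : Fin m, (((i : ℝ) + 1) ^ 3 - (i : ℝ) ^ 3) = (m : ℝ) ^ 3 := by
    rw [Fin.sum_univ_eq_sum_range (fun k => ((k : ℝ) + 1) ^ 3 - (k : ℝ) ^ 3) m]
    have := Finset.sum_range_sub (fun k : ℕ => (k : ℝ) ^ 3) m
    norm_num at this
    rwa [sum_sub_distrib]
  have cell (i : Fin m) : (m : ℝ) ^ 2 * ∫ t in (i : ℝ) / m..((i : ℝ) + 1) / m, (t - a i) ^ 2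
      = (((i : ℝ) + 1) ^ 3 - (i : ℝ) ^ 3) / (3 * m) - (2 * (i : ℝ) + 1) * a i
        + m * a i ^ 2 := by
    rw [integral_sub_sq]
    field_simp
    ring
  rw [W2sq, mul_sum, sum_congr rfl fun i _ => cell i, sum_add_distrib, sum_sub_distrib,
    ← sum_div, cube_telescope, ← mul_sum]
  field_simp

def kritzinger {n : ℕ} (xs : Fin n → ℝ) (x : ℝ) : ℝ :=
  ((n : ℝ) + 1) * x ^ 2 - x - 2 * ∑ k, max x (xs k)

section Kritzinger

variable {n : ℕ} {xs : Fin n → ℝ}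

theorem sq_mul_W2sq_sub_kritzinger (hxs : Monotone xs) {x : ℝ} {y : Fin (n + 1) → ℝ}
    (hy : IsSortedRearrangement y (x ::ₘ (↑(List.ofFn xs) : Multiset ℝ))) :
    ((n : ℝ) + 1) ^ 2 * W2sq (n + 1) y - kritzinger xs x
      = ((n : ℝ) + 1) ^ 2 / 3 + ((n : ℝ) + 1) * ∑ k, xs k ^ 2
        - ∑ k : Fin n, (2 * (k : ℝ) + 1) * xs k := by
  have sum_sq : ∑ i, y i ^ 2 = x ^ 2 + ∑ k, xs k ^ 2 := by
    rw [hy.sum_comp (· ^ 2), Multiset.map_cons, Multiset.sum_cons, Multiset.sum_map_coe_ofFn]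
  have sum_weighted : ∑ i : Fin (n + 1), (2 * (i : ℝ) + 1) * y i
      = x + 2 * ∑ k, max x (xs k) + ∑ k : Fin n, (2 * (k : ℝ) + 1) * xs k := by
    have hxs_sorted : IsSortedRearrangement xs ↑(List.ofFn xs) := ⟨hxs, rfl⟩
    rw [← hy.pairwiseMaxSum_eq, pairwiseMaxSum_cons, hxs_sorted.pairwiseMaxSum_eq,
      Multiset.sum_map_coe_ofFn, two_nsmul, two_mul]
  have hW := sq_mul_W2sq (n + 1) y
  push_cast at hW
  rw [hW, sum_sq, sum_weighted, kritzinger]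
  ring

theorem W2sq_le_W2sq_iff_kritzinger_le (hxs : Monotone xs) {x x' : ℝ} {y y' : Fin (n + 1) → ℝ}
    (hy : IsSortedRearrangement y (x ::ₘ (↑(List.ofFn xs) : Multiset ℝ)))
    (hy' : IsSortedRearrangement y' (x' ::ₘ (↑(List.ofFn xs) : Multiset ℝ))) :
    W2sq (n + 1) y ≤ W2sq (n + 1) y' ↔ kritzinger xs x ≤ kritzinger xs x' := by
  have h := sq_mul_W2sq_sub_kritzinger hxs hy
  have h' := sq_mul_W2sq_sub_kritzinger hxs hy'
  rw [← mul_le_mul_iff_of_pos_left (by positivity : (0 : ℝ) < ((n : ℝ) + 1) ^ 2)]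
  constructor <;> intro <;> linarith

end Kritzinger

theorem stmt_0_general (n : ℕ) (xs : Fin n → ℝ) (hmono : Monotone xs) :
    (∃ C : ℝ, ∀ x ∈ Set.Icc (0 : ℝ) 1, ∀ y : Fin (n + 1) → ℝ,
      IsSortedRearrangement y (x ::ₘ (↑(List.ofFn xs) : Multiset ℝ)) →
      ((n : ℝ) + 1) ^ 2 * W2sq (n + 1) y
        - (((n : ℝ) + 1) * x ^ 2 - x - 2 * ∑ k, max x (xs k)) = C) ∧
    (∀ xstar ∈ Set.Icc (0 : ℝ) 1,
      ((∀ ystar : Fin (n + 1) → ℝ,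
          IsSortedRearrangement ystar (xstar ::ₘ (↑(List.ofFn xs) : Multiset ℝ)) →
          ∀ x ∈ Set.Icc (0 : ℝ) 1, ∀ y : Fin (n + 1) → ℝ,
          IsSortedRearrangement y (x ::ₘ (↑(List.ofFn xs) : Multiset ℝ)) →
          W2sq (n + 1) ystar ≤ W2sq (n + 1) y)
        ↔
        (∀ x ∈ Set.Icc (0 : ℝ) 1,
          (((n : ℝ) + 1) * xstar ^ 2 - xstar - 2 * ∑ k, max xstar (xs k)) ≤
          (((n : ℝ) + 1) * x ^ 2 - x - 2 * ∑ k, max x (xs k))))) := by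
  have sorted_exists (x : ℝ) :
      ∃ y : Fin (n + 1) → ℝ, IsSortedRearrangement y (x ::ₘ (↑(List.ofFn xs) : Multiset ℝ)) :=
    exists_isSortedRearrangement _ (by simp)
  refine ⟨⟨_, fun x _ y hy => sq_mul_W2sq_sub_kritzinger hmono hy⟩, fun xstar _ => ⟨?_, ?_⟩⟩
  · intro hW x hx
    obtain ⟨ystar, hystar⟩ := sorted_exists xstar
    obtain ⟨y, hy⟩ := sorted_exists x
    exact (W2sq_le_W2sq_iff_kritzinger_le hmono hystar hy).1 (hW ystar hystar x hx y hy)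
  · intro hF ystar hystar x hx y hy
    exact (W2sq_le_W2sq_iff_kritzinger_le hmono hystar hy).2 (hF x hx)

theorem stmt_0 (n : ℕ) (hn : 1 ≤ n) (xs : Fin n → ℝ) (hmono : Monotone xs)
    (hmem : ∀ k, xs k ∈ Set.Icc (0 : ℝ) 1) :
    (∃ C : ℝ, ∀ x ∈ Set.Icc (0 : ℝ) 1, ∀ y : Fin (n + 1) → ℝ,
      IsSortedRearrangement y (x ::ₘ (↑(List.ofFn xs) : Multiset ℝ)) →
      ((n : ℝ) + 1) ^ 2 * W2sq (n + 1) y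
        - (((n : ℝ) + 1) * x ^ 2 - x - 2 * ∑ k, max x (xs k)) = C) ∧
    (∀ xstar ∈ Set.Icc (0 : ℝ) 1,
      ((∀ ystar : Fin (n + 1) → ℝ,
          IsSortedRearrangement ystar (xstar ::ₘ (↑(List.ofFn xs) : Multiset ℝ)) →
          ∀ x ∈ Set.Icc (0 : ℝ) 1, ∀ y : Fin (n + 1) → ℝ,
          IsSortedRearrangement y (x ::ₘ (↑(List.ofFn xs) : Multiset ℝ)) →
          W2sq (n + 1) ystar ≤ W2sq (n + 1) y)
        ↔
        (∀ x ∈ Set.Icc (0 : ℝ) 1,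
          (((n : ℝ) + 1) * xstar ^ 2 - xstar - 2 * ∑ k, max xstar (xs k)) ≤
          (((n : ℝ) + 1) * x ^ 2 - x - 2 * ∑ k, max x (xs k))))) :=
  stmt_0_general n xs hmono
end

section
/- For each n ≥ 1 there is a constant c_n ∈ ℝ, independent of the point configuration, such that for every choice of points 0 ≤ x_1 ≤ x_2 ≤ … ≤ x_n ≤ 1 one has ∫₀¹ |#{1 ≤ k ≤ n : x_k ≤ x} − n·x|² dx − n²·W₂²((1/n)∑_{k=1}^{n} δ_{x_k}, dx) = c_n. In particular, a configuration minimizes the L²-discrepancy if and only if it minimizes the Wasserstein distance to Lebesgue measure. -/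
/-- The L²-discrepancy `∫₀¹ |#{k : x_k ≤ x} − n·x|² dx` of points `x_1,…,x_n`. -/
noncomputable def L2Disc (n : ℕ) (xs : Fin n → ℝ) : ℝ :=
  ∫ x in (0:ℝ)..1,
    (((Finset.univ.filter (fun k => xs k ≤ x)).card : ℝ) - (n : ℝ) * x) ^ 2

open Finset

/-- The paper's points `x_1, …, x_n` (here `xs 0, …, xs (n-1)`) padded by `x_0 = 0` and by
`x_j = 1` for `j > n`. -/
noncomputable def paddedPoints {n : ℕ} (xs : Fin n → ℝ) (j : ℕ) : ℝ :=
  if h₀ : j = 0 then 0 else if h : j ≤ n then xs ⟨j - 1, by omega⟩ else 1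

section paddedPoints

variable {n : ℕ} {xs : Fin n → ℝ}

@[simp]
lemma paddedPoints_zero : paddedPoints xs 0 = 0 := rfl

lemma paddedPoints_succ {j : ℕ} (hj : j < n) : paddedPoints xs (j + 1) = xs ⟨j, hj⟩ := by
  simp [paddedPoints, Nat.succ_le_of_lt hj]

lemma paddedPoints_of_lt {j : ℕ} (hj : n < j) : paddedPoints xs j = 1 := by
  simp [paddedPoints, hj.not_ge, (Nat.zero_le n).trans_lt hj |>.ne']

lemma monotone_paddedPoints (hm : Monotone xs) (hx : ∀ k, xs k ∈ Set.Icc (0 : ℝ) 1) :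
    Monotone (paddedPoints xs) := by
  refine monotone_nat_of_le_succ fun j => ?_
  simp only [paddedPoints, Nat.add_one_ne_zero, dite_false]
  split_ifs <;> first
    | exact (hx _).1 | exact (hx _).2 | exact zero_le_one | exact le_rfl | omega
    | exact hm (Fin.mk_le_mk.mpr (by omega))

lemma card_filter_le_of_mem_Ioo (hm : Monotone xs) {j : ℕ} (hj : j ≤ n) {x : ℝ}
    (hxj : x ∈ Set.Ioo (paddedPoints xs j) (paddedPoints xs (j + 1))) :
    #{k | xs k ≤ x} = j := by
  have hfilter : ({k | xs k ≤ x} : Finset (Fin n)) = ({k | (k : ℕ) < j} : Finset (Fin n)) := by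
    ext k
    simp only [Finset.mem_filter, Finset.mem_univ, true_and]
    constructor
    · intro hk
      by_contra! hjk
      have hjn : j < n := hjk.trans_lt k.isLt
      have : xs ⟨j, hjn⟩ ≤ xs k := hm (Fin.mk_le_mk.mpr hjk)
      linarith [hxj.2, paddedPoints_succ (xs := xs) hjn]
    · intro hk
      obtain ⟨i, rfl⟩ : ∃ i, j = i + 1 := ⟨j - 1, by omega⟩
      have : xs k ≤ xs ⟨i, by omega⟩ := hm (Fin.mk_le_mk.mpr (by omega))
      linarith [hxj.1, paddedPoints_succ (xs := xs) (j := i) (by omega)]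
  rw [hfilter, Fin.card_filter_val_lt, min_eq_right hj]

end paddedPoints

lemma integral_sq_sub_mul {c : ℝ} (hc : c ≠ 0) (a b d : ℝ) :
    ∫ x in a..b, (d - c * x) ^ 2 = (c * b - d) ^ 3 / (3 * c) - (c * a - d) ^ 3 / (3 * c) := by
  have hsq : ∀ x, (d - c * x) ^ 2 = (c * x - d) ^ 2 := fun x => by ring
  simp_rw [hsq]
  rw [intervalIntegral.integral_comp_mul_sub (fun y => y ^ 2) hc, integral_pow, smul_eq_mul]
  field_simp
  ring

lemma sum_range_succ_sub_eq_sum_sub {g : ℕ → ℝ → ℝ} {a : ℕ → ℝ} (n : ℕ)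
    (h0 : g 0 (a 0) = 0) (hn : g n (a (n + 1)) = 0) :
    ∑ j ∈ range (n + 1), (g j (a (j + 1)) - g j (a j)) =
      ∑ i ∈ range n, (g i (a (i + 1)) - g (i + 1) (a (i + 1))) := by
  rw [sum_sub_distrib, sum_range_succ, sum_range_succ' (fun j => g j (a j)), hn, h0,
    add_zero, add_zero, ← sum_sub_distrib]

lemma L2Disc_eq_sum {n : ℕ} (hn : n ≠ 0) {xs : Fin n → ℝ} (hm : Monotone xs)
    (hx : ∀ k, xs k ∈ Set.Icc (0 : ℝ) 1) :
    L2Disc n xs = ∑ j ∈ range (n + 1),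
      ((n * paddedPoints xs (j + 1) - j) ^ 3 / (3 * n) -
        (n * paddedPoints xs j - j) ^ 3 / (3 * n)) := by
  set a := paddedPoints xs
  set F : ℝ → ℝ := fun x => ((#{k | xs k ≤ x} : ℕ) - (n : ℝ) * x) ^ 2
  have ha : Monotone a := monotone_paddedPoints hm hx
  have hF : ∀ j ≤ n, Set.EqOn F (fun x => ((j : ℝ) - n * x) ^ 2) (Set.Ioo (a j) (a (j + 1))) :=
    fun j hj x hxj => by simp only [F, card_filter_le_of_mem_Ioo hm hj hxj]
  have hint : ∀ j < n + 1, IntervalIntegrable F MeasureTheory.volume (a j) (a (j + 1)) := by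
    intro j hj
    refine (Continuous.intervalIntegrable
      (by fun_prop : Continuous fun x : ℝ => ((j : ℝ) - n * x) ^ 2) _ _).congr_uIoo ?_
    rw [Set.uIoo_of_le (ha j.le_succ)]
    exact (hF j (Nat.lt_succ_iff.mp hj)).symm
  have h1 : a (n + 1) = 1 := paddedPoints_of_lt n.lt_succ_self
  rw [L2Disc, ← paddedPoints_zero (xs := xs), ← h1,
    ← intervalIntegral.sum_integral_adjacent_intervals hint]
  refine sum_congr rfl fun j hj => ?_
  rw [intervalIntegral.integral_congr_Ioo_of_le (ha j.le_succ)
      (hF j (Nat.lt_succ_iff.mp (mem_range.mp hj))),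
    integral_sq_sub_mul (Nat.cast_ne_zero.mpr hn)]

lemma sq_mul_W2sq_eq_sum {n : ℕ} (hn : n ≠ 0) (xs : Fin n → ℝ) :
    (n : ℝ) ^ 2 * W2sq n xs = ∑ i : Fin n,
      ((n * xs i - i) ^ 3 / (3 * n) - (n * xs i - (i + 1 : ℕ)) ^ 3 / (3 * n)) := by
  have hn' : (n : ℝ) ≠ 0 := Nat.cast_ne_zero.mpr hn
  rw [W2sq, mul_sum]
  refine sum_congr rfl fun i _ => ?_
  have hsq : ∀ t, (n : ℝ) ^ 2 * (t - xs i) ^ 2 = (n * xs i - n * t) ^ 2 := fun t => by ring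
  rw [← intervalIntegral.integral_const_mul]
  simp_rw [hsq]
  rw [integral_sq_sub_mul hn']
  field_simp
  push_cast
  ring

theorem L2Disc_eq_sq_mul_W2sq {n : ℕ} {xs : Fin n → ℝ} (hm : Monotone xs)
    (hx : ∀ k, xs k ∈ Set.Icc (0 : ℝ) 1) :
    L2Disc n xs = (n : ℝ) ^ 2 * W2sq n xs := by
  rcases eq_or_ne n 0 with rfl | hn
  · simp [L2Disc]
  rw [L2Disc_eq_sum hn hm hx, sq_mul_W2sq_eq_sum hn,
    sum_range_succ_sub_eq_sum_sub (g := fun j y => (n * y - j) ^ 3 / (3 * n)) n (by simp)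
      (by simp [paddedPoints_of_lt n.lt_succ_self]),
    ← Fin.sum_univ_eq_sum_range]
  refine sum_congr rfl fun i _ => ?_
  rw [paddedPoints_succ i.isLt]

theorem L2Disc_le_L2Disc_iff {n : ℕ} {xs ys : Fin n → ℝ} (hxm : Monotone xs)
    (hx : ∀ k, xs k ∈ Set.Icc (0 : ℝ) 1) (hym : Monotone ys)
    (hy : ∀ k, ys k ∈ Set.Icc (0 : ℝ) 1) :
    L2Disc n xs ≤ L2Disc n ys ↔ W2sq n xs ≤ W2sq n ys := by
  rcases eq_or_ne n 0 with rfl | hn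
  · simp [Subsingleton.elim xs ys]
  rw [L2Disc_eq_sq_mul_W2sq hxm hx, L2Disc_eq_sq_mul_W2sq hym hy]
  exact mul_le_mul_iff_right₀ (by positivity)

theorem stmt_3_general (n : ℕ) :
    ∃ c : ℝ,
      (∀ xs : Fin n → ℝ, Monotone xs → (∀ k, xs k ∈ Set.Icc (0 : ℝ) 1) →
        L2Disc n xs - (n : ℝ) ^ 2 * W2sq n xs = c) ∧
      (∀ xs : Fin n → ℝ, Monotone xs → (∀ k, xs k ∈ Set.Icc (0 : ℝ) 1) →
        ((∀ ys : Fin n → ℝ, Monotone ys → (∀ k, ys k ∈ Set.Icc (0 : ℝ) 1) →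
            L2Disc n xs ≤ L2Disc n ys)
          ↔
        (∀ ys : Fin n → ℝ, Monotone ys → (∀ k, ys k ∈ Set.Icc (0 : ℝ) 1) →
            W2sq n xs ≤ W2sq n ys))) := by
  refine ⟨0, fun xs hm hx => by rw [L2Disc_eq_sq_mul_W2sq hm hx, sub_self], ?_⟩
  intro xs hxm hx
  exact forall_congr' fun ys => forall₂_congr fun hym hy => L2Disc_le_L2Disc_iff hxm hx hym hy

theorem stmt_3 (n : ℕ) (hn : 1 ≤ n) :
    ∃ c : ℝ,
      (∀ xs : Fin n → ℝ, Monotone xs → (∀ k, xs k ∈ Set.Icc (0 : ℝ) 1) →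
        L2Disc n xs - (n : ℝ) ^ 2 * W2sq n xs = c) ∧
      (∀ xs : Fin n → ℝ, Monotone xs → (∀ k, xs k ∈ Set.Icc (0 : ℝ) 1) →
        ((∀ ys : Fin n → ℝ, Monotone ys → (∀ k, ys k ∈ Set.Icc (0 : ℝ) 1) →
            L2Disc n xs ≤ L2Disc n ys)
          ↔
        (∀ ys : Fin n → ℝ, Monotone ys → (∀ k, ys k ∈ Set.Icc (0 : ℝ) 1) →
            W2sq n xs ≤ W2sq n ys))) :=
  stmt_3_general n
end

section
/- Let n ≥ 1, let x_1,…,x_n ∈ [0,1], write f_n(x) = #{1 ≤ k ≤ n : x_k ≤ x}, and let z ∈ [0,1]. Define f_{n+1}(x) = f_n(x) + 1_{[z,1]}(x) (the counting function after adding the point z). Then ∫₀¹ (f_{n+1}(x) − (n+1)x)² dx = ∫₀¹ (f_n(x) − nx)² dx − 2∫₀^z (f_n(x) − nx)·x dx + 2∫_z¹ (f_n(x) − nx)·(1−x) dx + (z³ + (1−z)³)/3. -/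
/-- The counting function `f_n(x) = #{1 ≤ k ≤ n : x_k ≤ x}`. -/
noncomputable def countFn (n : ℕ) (xs : Fin n → ℝ) (x : ℝ) : ℕ :=
  (Finset.univ.filter (fun k => xs k ≤ x)).card

/-!
With `g = f_n - n x`, the new integrand is `(g + 1_{[z,1]} - x)²`, which equals `(g - x)²` on
`(0, z)` and `(g + (1 - x))²` on `(z, 1)`. Expanding both squares yields `∫₀¹ g²`, the two weighted
integrals of `g`, and `∫₀^z x² + ∫_z^1 (1 - x)² = (z³ + (1 - z)³) / 3`. The identity holds for any
`g` with `g, g² ∈ L¹(0, 1)`; for the counting function this follows from monotonicity of `f_n`.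
-/

open MeasureTheory intervalIntegral Set
open scoped Interval

section SquareExpansion

variable {μ : Measure ℝ} [IsLocallyFiniteMeasure μ] {g c : ℝ → ℝ} {a b : ℝ}

lemma intervalIntegrable_add_sq (hg : IntervalIntegrable g μ a b)
    (hg2 : IntervalIntegrable (fun x => g x ^ 2) μ a b) (hc : ContinuousOn c [[a, b]]) :
    IntervalIntegrable (fun x => (g x + c x) ^ 2) μ a b := by
  have hc2 : ContinuousOn (fun x => c x ^ 2) [[a, b]] := hc.pow 2
  have h := (hg2.add ((hg.mul_continuousOn hc).const_mul 2)).add hc2.intervalIntegrable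
  exact h.congr fun x _ => by ring

lemma integral_add_sq (hg : IntervalIntegrable g μ a b)
    (hg2 : IntervalIntegrable (fun x => g x ^ 2) μ a b) (hc : ContinuousOn c [[a, b]]) :
    ∫ x in a..b, (g x + c x) ^ 2 ∂μ
      = (∫ x in a..b, g x ^ 2 ∂μ) + 2 * (∫ x in a..b, g x * c x ∂μ)
        + ∫ x in a..b, c x ^ 2 ∂μ := by
  have hgc := hg.mul_continuousOn hc
  have hc2 : ContinuousOn (fun x => c x ^ 2) [[a, b]] := hc.pow 2
  rw [← intervalIntegral.integral_const_mul, ← integral_add hg2 (hgc.const_mul 2),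
    ← integral_add (hg2.add (hgc.const_mul 2)) hc2.intervalIntegrable]
  exact integral_congr fun x _ => by ring

end SquareExpansion

theorem integral_sq_add_indicator_sub {g : ℝ → ℝ} (hg : IntervalIntegrable g volume 0 1)
    (hg2 : IntervalIntegrable (fun x => g x ^ 2) volume 0 1) {z : ℝ} (hz : z ∈ Icc (0 : ℝ) 1) :
    ∫ x in (0:ℝ)..1, (g x + (if z ≤ x then (1:ℝ) else 0) - x) ^ 2
      = (∫ x in (0:ℝ)..1, g x ^ 2) - 2 * (∫ x in (0:ℝ)..z, g x * x)
        + 2 * (∫ x in z..1, g x * (1 - x)) + (z ^ 3 + (1 - z) ^ 3) / 3 := by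
  have hz_mem : z ∈ [[(0:ℝ), 1]] := by rwa [uIcc_of_le zero_le_one]
  have left : [[(0:ℝ), z]] ⊆ [[0, 1]] := uIcc_subset_uIcc left_mem_uIcc hz_mem
  have right : [[z, (1:ℝ)]] ⊆ [[0, 1]] := uIcc_subset_uIcc hz_mem right_mem_uIcc
  have eq_left : EqOn (fun x => (g x + (if z ≤ x then (1:ℝ) else 0) - x) ^ 2)
      (fun x => (g x + -x) ^ 2) (uIoo 0 z) := fun x hx => by
    rw [uIoo_of_le hz.1] at hx
    simp [not_le.2 hx.2, sub_eq_add_neg]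
  have eq_right : EqOn (fun x => (g x + (if z ≤ x then (1:ℝ) else 0) - x) ^ 2)
      (fun x => (g x + (1 - x)) ^ 2) (uIoo z 1) := fun x hx => by
    rw [uIoo_of_le hz.2] at hx
    simp only [if_pos hx.1.le]; ring
  have cont_neg : ContinuousOn (fun x : ℝ => -x) [[0, z]] := continuousOn_neg
  have cont_one_sub : ContinuousOn (fun x : ℝ => 1 - x) [[z, 1]] := by fun_prop
  have int_left := intervalIntegrable_add_sq (hg.mono_set left) (hg2.mono_set left) cont_neg
  have int_right :=
    intervalIntegrable_add_sq (hg.mono_set right) (hg2.mono_set right) cont_one_sub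
  have sq_one_sub : ∫ x in z..1, (1 - x) ^ 2 = (1 - z) ^ 3 / 3 := by
    rw [integral_comp_sub_left (fun x => x ^ 2) 1]
    norm_num [integral_pow]
  rw [← integral_add_adjacent_intervals (int_left.congr_uIoo eq_left.symm)
      (int_right.congr_uIoo eq_right.symm), integral_congr_uIoo eq_left,
    integral_congr_uIoo eq_right,
    integral_add_sq (hg.mono_set left) (hg2.mono_set left) cont_neg,
    integral_add_sq (hg.mono_set right) (hg2.mono_set right) cont_one_sub,
    ← integral_add_adjacent_intervals (hg2.mono_set left) (hg2.mono_set right), sq_one_sub]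
  simp only [mul_neg, intervalIntegral.integral_neg, neg_sq, integral_pow]
  ring

lemma monotone_countFn (n : ℕ) (xs : Fin n → ℝ) : Monotone (countFn n xs) :=
  fun _ _ hxy => Finset.card_le_card <| Finset.monotone_filter_right _ fun _ _ hk => hk.trans hxy

theorem stmt_7_general (n : ℕ) (xs : Fin n → ℝ)
    (z : ℝ) (hz : z ∈ Set.Icc (0 : ℝ) 1) :
    (∫ x in (0:ℝ)..1,
        ((countFn n xs x : ℝ) + (if z ≤ x then (1:ℝ) else 0) - ((n : ℝ) + 1) * x) ^ 2)
      = (∫ x in (0:ℝ)..1, ((countFn n xs x : ℝ) - (n : ℝ) * x) ^ 2)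
        - 2 * (∫ x in (0:ℝ)..z, ((countFn n xs x : ℝ) - (n : ℝ) * x) * x)
        + 2 * (∫ x in z..1, ((countFn n xs x : ℝ) - (n : ℝ) * x) * (1 - x))
        + (z ^ 3 + (1 - z) ^ 3) / 3 := by
  have hmono := monotone_countFn n xs
  have hf : IntervalIntegrable (fun x => (countFn n xs x : ℝ)) volume 0 1 :=
    ((Nat.mono_cast (α := ℝ)).comp hmono).intervalIntegrable (μ := volume)
  have hf2 : IntervalIntegrable (fun x => (countFn n xs x : ℝ) ^ 2) volume 0 1 := by
    simpa [Function.comp_def] using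
      ((Nat.mono_cast (α := ℝ)).comp ((pow_left_mono 2).comp hmono)).intervalIntegrable
        (μ := volume) (a := 0) (b := 1)
  have hdrift : ContinuousOn (fun x : ℝ => -((n : ℝ) * x)) [[0, 1]] := by fun_prop
  have hg : IntervalIntegrable (fun x => (countFn n xs x : ℝ) - n * x) volume 0 1 :=
    hf.sub ((continuous_const.mul continuous_id).intervalIntegrable 0 1)
  have hg2 : IntervalIntegrable (fun x => ((countFn n xs x : ℝ) - n * x) ^ 2) volume 0 1 := by
    simpa only [← sub_eq_add_neg] using intervalIntegrable_add_sq hf hf2 hdrift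
  rw [← integral_sq_add_indicator_sub hg hg2 hz]
  exact integral_congr fun x _ => by ring

theorem stmt_7 (n : ℕ) (hn : 1 ≤ n) (xs : Fin n → ℝ)
    (hmem : ∀ k, xs k ∈ Set.Icc (0 : ℝ) 1)
    (z : ℝ) (hz : z ∈ Set.Icc (0 : ℝ) 1) :
    (∫ x in (0:ℝ)..1,
        ((countFn n xs x : ℝ) + (if z ≤ x then (1:ℝ) else 0) - ((n : ℝ) + 1) * x) ^ 2)
      = (∫ x in (0:ℝ)..1, ((countFn n xs x : ℝ) - (n : ℝ) * x) ^ 2)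
        - 2 * (∫ x in (0:ℝ)..z, ((countFn n xs x : ℝ) - (n : ℝ) * x) * x)
        + 2 * (∫ x in z..1, ((countFn n xs x : ℝ) - (n : ℝ) * x) * (1 - x))
        + (z ^ 3 + (1 - z) ^ 3) / 3 :=
  stmt_7_general n xs z hz
end

section
/- Let g : [0,1] → ℝ be continuous. Then max over z ∈ [0,1] of the quantity ∫₀^z g(x)·x dx − ∫_z¹ g(x)·(1−x) dx is nonnegative, i.e. there exists z ∈ [0,1] with ∫₀^z g(x)·x dx − ∫_z¹ g(x)·(1−x) dx ≥ 0. -/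
/-!
Write `G z = ∫_a^z g`. Integrating by parts against `x - a` on `[a, z]` and against `b - x`
on `[z, b]` gives
`∫_a^z g(x)(x - a) dx - ∫_z^b g(x)(b - x) dx = (b - a) G(z) - ∫_a^b G`.
By the mean value theorem for integrals `G` takes its average value at some `z`, where this
difference vanishes.
-/

open MeasureTheory intervalIntegral Set

theorem ContinuousOn.exists_continuous_eqOn_Icc {g : ℝ → ℝ} {a b : ℝ} (hab : a ≤ b)
    (hg : ContinuousOn g (Icc a b)) : ∃ f : ℝ → ℝ, Continuous f ∧ EqOn f g (Icc a b) :=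
  ⟨IccExtend hab ((Icc a b).domRestrict g),
    (continuousOn_iff_continuous_domRestrict.1 hg).Icc_extend',
    fun _ hx => IccExtend_of_mem hab _ hx⟩

section Primitive

variable {f : ℝ → ℝ} (a b z : ℝ)

theorem integral_mul_sub_left_eq (hf : Continuous f) :
    ∫ x in a..z, f x * (x - a) =
      (∫ t in a..z, f t) * (z - a) - ∫ y in a..z, ∫ t in a..y, f t := by
  have hparts := integral_mul_deriv_eq_deriv_mul (u := fun y => ∫ t in a..y, f t)
    (fun y _ => (hf.integral_hasStrictDerivAt a y).hasDerivAt)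
    (fun y _ => (hasDerivAt_id y).sub_const a) (hf.intervalIntegrable a z) intervalIntegrable_const
  simp only [mul_one, integral_same, zero_mul, sub_zero, id] at hparts
  linarith

theorem integral_mul_sub_right_eq (hf : Continuous f) :
    ∫ x in z..b, f x * (b - x) =
      (∫ y in z..b, ∫ t in a..y, f t) - (∫ t in a..z, f t) * (b - z) := by
  have hparts := integral_mul_deriv_eq_deriv_mul (u := fun y => ∫ t in a..y, f t)
    (fun y _ => (hf.integral_hasStrictDerivAt a y).hasDerivAt)
    (fun y _ => by simpa using (hasDerivAt_id y).const_sub b) (hf.intervalIntegrable z b)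
    intervalIntegrable_const
  simp only [mul_neg, mul_one, intervalIntegral.integral_neg, sub_self, mul_zero, zero_sub]
    at hparts
  linarith

theorem integral_mul_sub_left_sub_integral_mul_sub_right (hf : Continuous f) :
    (∫ x in a..z, f x * (x - a)) - ∫ x in z..b, f x * (b - x)
      = (b - a) * (∫ t in a..z, f t) - ∫ y in a..b, ∫ t in a..y, f t := by
  have hprimitive : Continuous fun y => ∫ t in a..y, f t :=
    continuous_primitive hf.intervalIntegrable a
  rw [integral_mul_sub_left_eq a z hf, integral_mul_sub_right_eq a b z hf,
    ← integral_add_adjacent_intervals (hprimitive.intervalIntegrable a z)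
      (hprimitive.intervalIntegrable z b)]
  ring

end Primitive

theorem exists_mem_Ioo_integral_mul_sub_left_eq_integral_mul_sub_right {g : ℝ → ℝ} {a b : ℝ}
    (hab : a < b) (hg : ContinuousOn g (Icc a b)) :
    ∃ z ∈ Ioo a b, ∫ x in a..z, g x * (x - a) = ∫ x in z..b, g x * (b - x) := by
  obtain ⟨f, hf, hfg⟩ := hg.exists_continuous_eqOn_Icc hab.le
  obtain ⟨z, hz, hmean⟩ := exists_eq_interval_average hab.ne
    (continuous_primitive (μ := volume) hf.intervalIntegrable a).continuousOn
  rw [uIoo_of_le hab.le] at hz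
  have hleft : ∫ x in a..z, g x * (x - a) = ∫ x in a..z, f x * (x - a) := by
    refine integral_congr fun x hx => ?_
    rw [uIcc_of_le hz.1.le] at hx
    simp only [hfg ⟨hx.1, hx.2.trans hz.2.le⟩]
  have hright : ∫ x in z..b, g x * (b - x) = ∫ x in z..b, f x * (b - x) := by
    refine integral_congr fun x hx => ?_
    rw [uIcc_of_le hz.2.le] at hx
    simp only [hfg ⟨hz.1.le.trans hx.1, hx.2⟩]
  have hdiff := integral_mul_sub_left_sub_integral_mul_sub_right a b z hf
  rw [hmean, interval_average_eq_div, mul_div_cancel₀ _ (sub_ne_zero.2 hab.ne'), sub_self,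
    sub_eq_zero] at hdiff
  exact ⟨z, hz, by rw [hleft, hright, hdiff]⟩

theorem stmt_8 (g : ℝ → ℝ) (hg : ContinuousOn g (Set.Icc (0 : ℝ) 1)) :
    ∃ z ∈ Set.Icc (0 : ℝ) 1,
      0 ≤ (∫ x in (0:ℝ)..z, g x * x) - ∫ x in z..1, g x * (1 - x) := by
  obtain ⟨z, hz, heq⟩ :=
    exists_mem_Ioo_integral_mul_sub_left_eq_integral_mul_sub_right zero_lt_one hg
  simp only [sub_zero] at heq
  exact ⟨z, Ioo_subset_Icc_self hz, by rw [heq, sub_self]⟩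
end

section
/- Let g : [0,1] → ℝ be continuous with g not identically zero. Then max over z ∈ [0,1] of ∫₀^z g(x)·x dx − ∫_z¹ g(x)·(1−x) dx is at least (1/16)·(1/‖g‖²_{L²[0,1]})·(max over x ∈ [0,1] of |∫₀^x g(y) dy|)³, where ‖g‖²_{L²[0,1]} = ∫₀¹ g(x)² dx. -/
/-! Write `G x = ∫₀ˣ g` and `L = ∫₀¹ g²`. Integration by parts turns the functional at `z` into
`∫₀¹ (G z - G t) dt`, and we take `z` a maximiser of `G` on `[0, 1]`. By Cauchy–Schwarz, `G` is
Hölder-½: `(G s - G t)² ≤ |s - t| L`. As `G 0 = 0`, `G z - G` reaches `M = |G x|` somewhere, so it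
stays `≥ M / 2` on an interval of length `M² / (4L) ≤ 1 / 4` inside `[0, 1]`, whence
`∫₀¹ (G z - G) ≥ M³ / (8L)`. If `L = 0` the left-hand side is `0` because `1 / 0 = 0`. -/

open Set intervalIntegral MeasureTheory

theorem sq_integral_le_sub_mul_integral_sq {f : ℝ → ℝ} {a b : ℝ} (hab : a ≤ b)
    (hf : IntervalIntegrable f volume a b)
    (hf2 : IntervalIntegrable (fun t => f t ^ 2) volume a b) :
    (∫ t in a..b, f t) ^ 2 ≤ (b - a) * ∫ t in a..b, f t ^ 2 := by
  set I := ∫ t in a..b, f t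
  rcases hab.eq_or_lt with rfl | hlt
  · simp [I]
  have hexpand : ∫ t in a..b, ((b - a) * f t - I) ^ 2
      = (b - a) * ((b - a) * ∫ t in a..b, f t ^ 2) - (b - a) * I ^ 2 := by
    have hsq : ∀ t, ((b - a) * f t - I) ^ 2
        = (b - a) ^ 2 * f t ^ 2 - (2 * (b - a) * I) * f t + I ^ 2 := fun t => by ring
    simp_rw [hsq]
    rw [integral_add ((hf2.const_mul _).sub (hf.const_mul _)) intervalIntegrable_const,
      integral_sub (hf2.const_mul _) (hf.const_mul _), intervalIntegral.integral_const_mul,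
      intervalIntegral.integral_const_mul, intervalIntegral.integral_const, smul_eq_mul]
    ring
  have hnonneg : 0 ≤ ∫ t in a..b, ((b - a) * f t - I) ^ 2 :=
    integral_nonneg hab fun t _ => sq_nonneg _
  rw [hexpand] at hnonneg
  exact le_of_mul_le_mul_left (by linarith) (sub_pos.2 hlt)

theorem sq_integral_le_abs_sub_mul_integral_sq {f : ℝ → ℝ} (hf : Continuous f) {a b c d : ℝ}
    (ha : a ∈ Icc c d) (hb : b ∈ Icc c d) :
    (∫ t in a..b, f t) ^ 2 ≤ |b - a| * ∫ t in c..d, f t ^ 2 := by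
  wlog hab : a ≤ b generalizing a b
  · rw [integral_symm, neg_sq, abs_sub_comm]
    exact this hb ha (le_of_not_ge hab)
  calc (∫ t in a..b, f t) ^ 2 ≤ (b - a) * ∫ t in a..b, f t ^ 2 :=
        sq_integral_le_sub_mul_integral_sq hab (hf.intervalIntegrable _ _)
          ((hf.pow 2).intervalIntegrable _ _)
    _ ≤ |b - a| * ∫ t in c..d, f t ^ 2 := by
        rw [abs_of_nonneg (sub_nonneg.2 hab)]
        exact mul_le_mul_of_nonneg_left (integral_mono_interval ha.1 hab hb.2
          (Filter.Eventually.of_forall fun t => sq_nonneg (f t))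
          ((hf.pow 2).intervalIntegrable _ _))
          (sub_nonneg.2 hab)

theorem integral_mul_sub_eq_integral_primitive {f : ℝ → ℝ} (hf : Continuous f) (a b : ℝ) :
    ∫ t in a..b, f t * (b - t) = ∫ t in a..b, ∫ s in a..t, f s := by
  have hparts := integral_mul_deriv_eq_deriv_mul (a := a) (b := b) (u := fun t => ∫ s in a..t, f s)
    (v := fun t => t - b) (u' := f) (v' := fun _ => 1)
    (fun t _ => (hf.integral_hasStrictDerivAt a t).hasDerivAt)
    (fun t _ => (hasDerivAt_id t).sub_const b) (hf.intervalIntegrable _ _) intervalIntegrable_const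
  simp only [mul_one, sub_self, mul_zero, integral_same, zero_mul, zero_sub] at hparts
  rw [hparts, ← intervalIntegral.integral_neg]
  congr 1 with t
  ring

theorem integral_mul_id_sub_integral_mul_one_sub {f : ℝ → ℝ} (hf : Continuous f) (z : ℝ) :
    (∫ t in (0:ℝ)..z, f t * t) - ∫ t in z..1, f t * (1 - t)
      = ∫ t in (0:ℝ)..1, ((∫ s in (0:ℝ)..z, f s) - ∫ s in (0:ℝ)..t, f s) := by
  have hfi : ∀ a b : ℝ, IntervalIntegrable (fun t => f t * (1 - t)) volume a b :=
    fun a b => (hf.mul (continuous_const.sub continuous_id)).intervalIntegrable a b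
  have hsplit : ∫ t in (0:ℝ)..z, f t * t
      = (∫ t in (0:ℝ)..z, f t) - ∫ t in (0:ℝ)..z, f t * (1 - t) := by
    rw [← integral_sub (hf.intervalIntegrable _ _) (hfi _ _)]
    congr 1 with t
    ring
  rw [hsplit, integral_sub intervalIntegrable_const
      ((continuous_primitive (fun a b => hf.intervalIntegrable a b) 0).intervalIntegrable _ _),
    ← integral_mul_sub_eq_integral_primitive hf,
    ← integral_add_adjacent_intervals (hfi 0 z) (hfi z 1)]
  simp only [intervalIntegral.integral_const, sub_zero, one_smul]
  ring

theorem mul_half_le_integral_of_sq_sub_le {w : ℝ → ℝ} {L M δ s : ℝ}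
    (hw : IntervalIntegrable w volume 0 1) (hw0 : ∀ t ∈ Icc (0:ℝ) 1, 0 ≤ w t)
    (hs : s ∈ Icc (0:ℝ) 1) (hMs : M ≤ w s)
    (hws : ∀ t ∈ Icc (0:ℝ) 1, (w t - w s) ^ 2 ≤ |s - t| * L)
    (hδ0 : 0 ≤ δ) (hδ : δ ≤ 1 / 2) (hδL : δ * L ≤ M ^ 2 / 4) (hL : 0 ≤ L) :
    δ * (M / 2) ≤ ∫ t in (0:ℝ)..1, w t := by
  obtain ⟨c, hc0, hc1, hcs, hsc⟩ : ∃ c, 0 ≤ c ∧ c + δ ≤ 1 ∧ c ≤ s ∧ s ≤ c + δ := by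
    rcases le_total s (1 / 2) with h | h
    · exact ⟨s, hs.1, by linarith, le_rfl, by linarith⟩
    · exact ⟨s - δ, by linarith, by linarith [hs.2], by linarith, by linarith⟩
  have hlow : ∀ t ∈ Icc c (c + δ), M / 2 ≤ w t := by
    intro t ht
    have htI : t ∈ Icc (0:ℝ) 1 := ⟨by linarith [ht.1], by linarith [ht.2]⟩
    have hdist : |s - t| * L ≤ δ * L :=
      mul_le_mul_of_nonneg_right (abs_sub_le_iff.2 ⟨by linarith [ht.1], by linarith [ht.2]⟩) hL
    nlinarith [hws t htI, hw0 t htI]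
  have hsub : IntervalIntegrable w volume c (c + δ) :=
    hw.mono_set (by
      rw [uIcc_of_le zero_le_one, uIcc_of_le (by linarith)]; exact Icc_subset_Icc hc0 hc1)
  calc δ * (M / 2) = ∫ _ in c..(c + δ), M / 2 := by
        rw [intervalIntegral.integral_const, smul_eq_mul]; ring
    _ ≤ ∫ t in c..(c + δ), w t := integral_mono_on (by linarith) intervalIntegrable_const hsub hlow
    _ ≤ ∫ t in (0:ℝ)..1, w t := integral_mono_interval hc0 (by linarith) hc1
        ((ae_restrict_mem measurableSet_Ioc).mono fun t ht => hw0 t (Ioc_subset_Icc_self ht)) hw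

theorem cube_div_le_integral_of_sq_sub_le {w : ℝ → ℝ} {L M s : ℝ}
    (hw : IntervalIntegrable w volume 0 1) (hw0 : ∀ t ∈ Icc (0:ℝ) 1, 0 ≤ w t)
    (hs : s ∈ Icc (0:ℝ) 1) (hMs : M ≤ w s)
    (hws : ∀ t ∈ Icc (0:ℝ) 1, (w t - w s) ^ 2 ≤ |s - t| * L) (hML : M ^ 2 ≤ L) :
    M ^ 3 / (8 * L) ≤ ∫ t in (0:ℝ)..1, w t := by
  have hL : 0 ≤ L := (sq_nonneg M).trans hML
  have hδ : M ^ 2 / (4 * L) ≤ 1 / 2 := by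
    rcases hL.eq_or_lt with hL0 | hLpos
    · simp [← hL0]
    · rw [div_le_iff₀ (by positivity)]
      linarith
  have hδL : M ^ 2 / (4 * L) * L ≤ M ^ 2 / 4 :=
    calc M ^ 2 / (4 * L) * L = M ^ 2 / 4 * (L / L) := by ring
      _ ≤ M ^ 2 / 4 * 1 := mul_le_mul_of_nonneg_left (div_self_le_one L) (by positivity)
      _ = M ^ 2 / 4 := mul_one _
  calc M ^ 3 / (8 * L) = M ^ 2 / (4 * L) * (M / 2) := by ring
    _ ≤ ∫ t in (0:ℝ)..1, w t :=
      mul_half_le_integral_of_sq_sub_le hw hw0 hs hMs hws (by positivity) hδ hδL hL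

theorem exists_abs_le_sub_of_isMaxOn {α : Type*} {G : α → ℝ} {S : Set α} {p z x : α}
    (hp : p ∈ S) (hGp : G p = 0) (hz : IsMaxOn G S z) (hx : x ∈ S) :
    ∃ s ∈ S, |G x| ≤ G z - G s := by
  rcases le_total 0 (G x) with h | h
  · exact ⟨p, hp, by rw [abs_of_nonneg h, hGp, sub_zero]; exact hz hx⟩
  · refine ⟨x, hx, ?_⟩
    have hGz : G p ≤ G z := hz hp
    rw [abs_of_nonpos h]
    linarith

theorem exists_cube_abs_primitive_le_of_continuous {g : ℝ → ℝ} (hg : Continuous g) :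
    ∃ z ∈ Icc (0 : ℝ) 1, ∀ x ∈ Icc (0 : ℝ) 1,
      (1 / 16) * (1 / ∫ t in (0:ℝ)..1, (g t) ^ 2) * |∫ t in (0:ℝ)..x, g t| ^ 3
        ≤ (∫ t in (0:ℝ)..z, g t * t) - ∫ t in z..1, g t * (1 - t) := by
  set L := ∫ t in (0:ℝ)..1, (g t) ^ 2
  set G := fun x => ∫ t in (0:ℝ)..x, g t
  have hL : 0 ≤ L := integral_nonneg zero_le_one fun t _ => sq_nonneg _
  have hG : Continuous G := continuous_primitive (fun a b => hg.intervalIntegrable a b) 0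
  have hholder : ∀ s ∈ Icc (0:ℝ) 1, ∀ t ∈ Icc (0:ℝ) 1, (G s - G t) ^ 2 ≤ |s - t| * L :=
    fun s hs t ht => by
      rw [integral_interval_sub_left (hg.intervalIntegrable _ _) (hg.intervalIntegrable _ _)]
      exact sq_integral_le_abs_sub_mul_integral_sq hg ht hs
  have h0 : (0:ℝ) ∈ Icc (0:ℝ) 1 := left_mem_Icc.2 zero_le_one
  obtain ⟨z, hz, hzmax⟩ := isCompact_Icc.exists_isMaxOn (nonempty_Icc.2 zero_le_one) hG.continuousOn
  refine ⟨z, hz, fun x hx => ?_⟩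
  rw [integral_mul_id_sub_integral_mul_one_sub hg]
  obtain ⟨s, hs, hxs⟩ := exists_abs_le_sub_of_isMaxOn h0 integral_same hzmax hx
  set M := |G x|
  have hML : M ^ 2 ≤ L :=
    calc M ^ 2 = (G x - G 0) ^ 2 := by simp [M, G]
      _ ≤ |x - 0| * L := hholder x hx 0 h0
      _ ≤ 1 * L := mul_le_mul_of_nonneg_right (by rw [sub_zero, abs_of_nonneg hx.1]; exact hx.2) hL
      _ = L := one_mul L
  have hbound := cube_div_le_integral_of_sq_sub_le (w := fun t => G z - G t)
    ((continuous_const.sub hG).intervalIntegrable _ _) (fun t ht => sub_nonneg.2 (hzmax ht))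
    hs hxs (fun t ht => by rw [sub_sub_sub_cancel_left]; exact hholder s hs t ht) hML
  have hcube : M ^ 3 / (8 * L) = 2 * (1 / 16 * (1 / L) * M ^ 3) := by ring
  have hcube_nonneg : 0 ≤ 1 / 16 * (1 / L) * M ^ 3 := by positivity
  linarith

theorem stmt_10_general (g : ℝ → ℝ) (hg : ContinuousOn g (Set.Icc (0 : ℝ) 1)) :
    ∃ z ∈ Set.Icc (0 : ℝ) 1, ∀ x ∈ Set.Icc (0 : ℝ) 1,
      (1 / 16) * (1 / ∫ t in (0:ℝ)..1, (g t) ^ 2) * |∫ t in (0:ℝ)..x, g t| ^ 3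
        ≤ (∫ t in (0:ℝ)..z, g t * t) - ∫ t in z..1, g t * (1 - t) := by
  obtain ⟨g', hg', hgg'⟩ : ∃ g' : ℝ → ℝ, Continuous g' ∧ EqOn g g' (Icc 0 1) :=
    ⟨IccExtend zero_le_one ((Icc 0 1).domRestrict g), hg.domRestrict.Icc_extend',
      fun t ht => by rw [IccExtend_of_mem zero_le_one _ ht]; rfl⟩
  have hcongr : ∀ c ∈ Icc (0:ℝ) 1, ∀ d ∈ Icc (0:ℝ) 1, ∀ F : ℝ → ℝ → ℝ,
      ∫ t in c..d, F t (g t) = ∫ t in c..d, F t (g' t) := fun c hc d hd F =>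
    integral_congr fun t ht => by simp only [hgg' (uIcc_subset_Icc hc hd ht)]
  have h0 : (0:ℝ) ∈ Icc (0:ℝ) 1 := left_mem_Icc.2 zero_le_one
  have h1 : (1:ℝ) ∈ Icc (0:ℝ) 1 := right_mem_Icc.2 zero_le_one
  obtain ⟨z, hz, hmain⟩ := exists_cube_abs_primitive_le_of_continuous hg'
  refine ⟨z, hz, fun x hx => ?_⟩
  rw [hcongr 0 h0 1 h1 fun _ y => y ^ 2, hcongr 0 h0 x hx fun _ y => y,
    hcongr 0 h0 z hz fun t y => y * t, hcongr z hz 1 h1 fun t y => y * (1 - t)]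
  exact hmain x hx

theorem stmt_10 (g : ℝ → ℝ) (hg : ContinuousOn g (Set.Icc (0 : ℝ) 1))
    (hne : ∃ x ∈ Set.Icc (0 : ℝ) 1, g x ≠ 0) :
    ∃ z ∈ Set.Icc (0 : ℝ) 1, ∀ x ∈ Set.Icc (0 : ℝ) 1,
      (1 / 16) * (1 / ∫ t in (0:ℝ)..1, (g t) ^ 2) * |∫ t in (0:ℝ)..x, g t| ^ 3
        ≤ (∫ t in (0:ℝ)..z, g t * t) - ∫ t in z..1, g t * (1 - t) :=
  stmt_10_general g hg
end

section
/- Let g : [0,1] → ℝ be continuous with g not identically zero, let G(s) = ∫₀^s g(x) dx, and let Ḡ = ∫₀¹ G(x) dx. Then max over z ∈ [0,1] of G(z) − Ḡ is at least (1/(8·‖g‖²_{L²[0,1]}))·(Ḡ − min over x ∈ [0,1] of G(x))³, where ‖g‖²_{L²[0,1]} = ∫₀¹ g(x)² dx. -/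
/-!
Let `w` minimise `G` on `[0,1]` and `δ = Ḡ - G w`. By Cauchy–Schwarz, `G` is `1/2`-Hölder:
`(G t - G w)² ≤ ‖g‖² |t - w|`. Hence `G ≤ Ḡ - δ/2` on an interval of length
`r = δ²/(4‖g‖²)` around `w`, and averaging `G` over `[0,1]`, bounded by `max G` off that
interval, gives `r δ / 2 ≤ max G - Ḡ`, that is `δ³ ≤ 8 ‖g‖² (max G - Ḡ)`.
-/

open MeasureTheory Set

theorem sq_intervalIntegral_le_mul_integral_sq {f : ℝ → ℝ} {a b : ℝ}
    (hf : IntervalIntegrable f volume a b)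
    (hf2 : IntervalIntegrable (fun x => f x ^ 2) volume a b) :
    (∫ x in a..b, f x) ^ 2 ≤ (b - a) * ∫ x in a..b, f x ^ 2 := by
  wlog hab : a ≤ b generalizing a b
  · have := this hf.symm hf2.symm (le_of_not_ge hab)
    rw [intervalIntegral.integral_symm a b, intervalIntegral.integral_symm a b] at this
    linarith
  -- the quadratic `c ↦ ∫ (f - c)²` is nonnegative, so its discriminant is nonpositive
  have hquad : ∀ c : ℝ,
      0 ≤ (b - a) * (c * c) + (-2 * ∫ x in a..b, f x) * c + ∫ x in a..b, f x ^ 2 := by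
    intro c
    have hexp : ∫ x in a..b, (f x - c) ^ 2
        = (b - a) * (c * c) + (-2 * ∫ x in a..b, f x) * c + ∫ x in a..b, f x ^ 2 := by
      simp_rw [sub_sq]
      rw [intervalIntegral.integral_add (hf2.sub ((hf.const_mul 2).mul_const c))
          intervalIntegrable_const,
        intervalIntegral.integral_sub hf2 ((hf.const_mul 2).mul_const c),
        intervalIntegral.integral_mul_const, intervalIntegral.integral_const_mul,
        intervalIntegral.integral_const, smul_eq_mul]
      ring
    exact hexp ▸ intervalIntegral.integral_nonneg hab fun x _ => sq_nonneg _
  have hdisc := discrim_le_zero hquad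
  rw [discrim] at hdisc
  linarith

theorem intervalIntegral_le_mul_of_forall_le {f : ℝ → ℝ} {a b M : ℝ} (hab : a ≤ b)
    (hf : IntervalIntegrable f volume a b) (hM : ∀ x ∈ Icc a b, f x ≤ M) :
    ∫ x in a..b, f x ≤ (b - a) * M := by
  simpa using intervalIntegral.integral_mono_on hab hf intervalIntegrable_const hM

theorem intervalIntegral_le_sub_mul_of_le_on {f : ℝ → ℝ} {p a b q M c : ℝ}
    (hpa : p ≤ a) (hab : a ≤ b) (hbq : b ≤ q) (hf : IntervalIntegrable f volume p q)
    (hM : ∀ x ∈ Icc p q, f x ≤ M) (hc : ∀ x ∈ Icc a b, f x ≤ c) :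
    ∫ x in p..q, f x ≤ (q - p) * M - (b - a) * (M - c) := by
  have hgap : IntervalIntegrable (fun x => M - f x) volume p q := intervalIntegrable_const.sub hf
  have hlow : (b - a) * (M - c) ≤ ∫ x in a..b, (M - f x) := by
    have := intervalIntegral.integral_mono_on hab intervalIntegrable_const
      (hgap.mono_set (by
        rw [uIcc_of_le hab, uIcc_of_le (hpa.trans (hab.trans hbq))]
        exact Icc_subset_Icc hpa hbq))
      fun x hx => sub_le_sub_left (hc x hx) M
    simp only [intervalIntegral.integral_const, smul_eq_mul] at this
    linarith
  have hmono : ∫ x in a..b, (M - f x) ≤ ∫ x in p..q, (M - f x) :=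
    intervalIntegral.integral_mono_interval hpa hab hbq
      ((ae_restrict_mem measurableSet_Ioc).mono
        fun x hx => sub_nonneg.2 (hM x (Ioc_subset_Icc_self hx))) hgap
  rw [intervalIntegral.integral_sub intervalIntegrable_const hf,
    intervalIntegral.integral_const, smul_eq_mul] at hmono
  linarith

theorem sq_intervalIntegral_le_abs_sub_mul_integral_sq {f : ℝ → ℝ} {a b s t : ℝ}
    (hf : IntervalIntegrable f volume a b) (hf2 : IntervalIntegrable (fun x => f x ^ 2) volume a b)
    (hs : s ∈ Icc a b) (ht : t ∈ Icc a b) :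
    (∫ x in s..t, f x) ^ 2 ≤ |t - s| * ∫ x in a..b, f x ^ 2 := by
  wlog hst : s ≤ t generalizing s t
  · rw [intervalIntegral.integral_symm, neg_sq, abs_sub_comm]
    exact this ht hs (le_of_not_ge hst)
  have hsub : uIcc s t ⊆ uIcc a b := (uIcc_subset_Icc hs ht).trans Icc_subset_uIcc
  calc (∫ x in s..t, f x) ^ 2 ≤ (t - s) * ∫ x in s..t, f x ^ 2 :=
        sq_intervalIntegral_le_mul_integral_sq (hf.mono_set hsub) (hf2.mono_set hsub)
    _ ≤ |t - s| * ∫ x in a..b, f x ^ 2 := by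
        rw [abs_of_nonneg (sub_nonneg.2 hst)]
        exact mul_le_mul_of_nonneg_left (intervalIntegral.integral_mono_interval hs.1 hst ht.2
          (Filter.Eventually.of_forall fun x => sq_nonneg (f x)) hf2) (sub_nonneg.2 hst)

theorem mul_sub_le_of_sq_sub_le_mul_abs {G : ℝ → ℝ} {E M w r : ℝ}
    (hG : IntervalIntegrable G volume 0 1) (hM : ∀ t ∈ Icc (0 : ℝ) 1, G t ≤ M)
    (hw : w ∈ Icc (0 : ℝ) 1) (hE : 0 ≤ E)
    (hHolder : ∀ t ∈ Icc (0 : ℝ) 1, (G t - G w) ^ 2 ≤ E * |t - w|)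
    (hδ : G w ≤ ∫ t in (0 : ℝ)..1, G t) (hr0 : 0 ≤ r) (hr1 : r ≤ 1)
    (hrE : 4 * E * r ≤ ((∫ t in (0 : ℝ)..1, G t) - G w) ^ 2) :
    r * ((∫ t in (0 : ℝ)..1, G t) - G w) / 2 ≤
      (1 - r) * (M - ∫ t in (0 : ℝ)..1, G t) := by
  set Gbar := ∫ t in (0 : ℝ)..1, G t
  set a := min w (1 - r)
  have ha0 : 0 ≤ a := le_min hw.1 (sub_nonneg.2 hr1)
  have har1 : a + r ≤ 1 := by linarith [min_le_right w (1 - r)]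
  have haw : a ≤ w := min_le_left _ _
  have hwar : w ≤ a + r := by
    rcases min_choice w (1 - r) with h | h <;> simp only [a, h] <;> linarith [hw.2]
  have hlow : ∀ s ∈ Icc a (a + r), G s ≤ Gbar - (Gbar - G w) / 2 := by
    intro s hs
    have hsw : E * |s - w| ≤ E * r :=
      mul_le_mul_of_nonneg_left (abs_le.2 ⟨by linarith [hs.1], by linarith [hs.2]⟩) hE
    have hsq : (G s - G w) ^ 2 ≤ ((Gbar - G w) / 2) ^ 2 := by
      linarith [hHolder s ⟨ha0.trans hs.1, hs.2.trans har1⟩]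
    linarith [abs_le_of_sq_le_sq' hsq (by linarith)]
  have := intervalIntegral_le_sub_mul_of_le_on ha0 (le_add_of_nonneg_right hr0) har1 hG hM hlow
  linarith

theorem cube_sub_le_of_sq_sub_le_mul_abs {G : ℝ → ℝ} {E M w : ℝ}
    (hG : IntervalIntegrable G volume 0 1) (hM : ∀ t ∈ Icc (0 : ℝ) 1, G t ≤ M)
    (hw : w ∈ Icc (0 : ℝ) 1) (hE : 0 ≤ E)
    (hHolder : ∀ t ∈ Icc (0 : ℝ) 1, (G t - G w) ^ 2 ≤ E * |t - w|) :
    ((∫ t in (0 : ℝ)..1, G t) - G w) ^ 3 ≤ 8 * E * (M - ∫ t in (0 : ℝ)..1, G t) := by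
  set Gbar := ∫ t in (0 : ℝ)..1, G t
  set δ := Gbar - G w
  have hmean : Gbar ≤ M := by
    simpa using intervalIntegral_le_mul_of_forall_le zero_le_one hG hM
  rcases le_or_gt δ 0 with hδ | hδ
  · exact (Odd.pow_nonpos (by decide) hδ).trans (by have := sub_nonneg.2 hmean; positivity)
  -- for `r = 1` the previous lemma would force `δ ≤ 0`
  have hδE : δ ^ 2 < 4 * E := by
    by_contra! h
    have := mul_sub_le_of_sq_sub_le_mul_abs hG hM hw hE hHolder (sub_nonneg.1 hδ.le)
      zero_le_one le_rfl (by linarith)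
    linarith
  have hEpos : 0 < E := by nlinarith
  set r := δ ^ 2 / (4 * E)
  have hr0 : 0 ≤ r := by positivity
  have hbound := mul_sub_le_of_sq_sub_le_mul_abs hG hM hw hE hHolder (sub_nonneg.1 hδ.le) hr0
    ((div_le_one (by positivity)).2 hδE.le) (mul_div_cancel₀ _ (by positivity)).le
  calc δ ^ 3 = 8 * E * (r * δ / 2) := by simp only [r]; field_simp; ring
    _ ≤ 8 * E * (M - Gbar) := by
      gcongr
      nlinarith [sub_nonneg.2 hmean, hbound]

theorem stmt_11_general (g : ℝ → ℝ) (hg : ContinuousOn g (Set.Icc (0 : ℝ) 1))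
    (G : ℝ → ℝ) (hG : ∀ s, G s = ∫ x in (0:ℝ)..s, g x)
    (Gbar : ℝ) (hGbar : Gbar = ∫ x in (0:ℝ)..1, G x) :
    ∃ z ∈ Set.Icc (0 : ℝ) 1, ∀ x ∈ Set.Icc (0 : ℝ) 1,
      (1 / (8 * ∫ t in (0:ℝ)..1, (g t) ^ 2)) * (Gbar - G x) ^ 3
        ≤ G z - Gbar := by
  have hgi : IntervalIntegrable g volume 0 1 := hg.intervalIntegrable_of_Icc zero_le_one
  have hGc : ContinuousOn G (Icc 0 1) := by
    have := intervalIntegral.continuousOn_primitive_interval' hgi left_mem_uIcc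
    rw [uIcc_of_le zero_le_one] at this
    exact this.congr fun s _ => hG s
  have hGi : IntervalIntegrable G volume 0 1 := hGc.intervalIntegrable_of_Icc zero_le_one
  obtain ⟨z, hz, hzmax⟩ := isCompact_Icc.exists_isMaxOn (nonempty_Icc.2 zero_le_one) hGc
  obtain ⟨w, hw, hwmin⟩ := isCompact_Icc.exists_isMinOn (nonempty_Icc.2 zero_le_one) hGc
  have hHolder : ∀ t ∈ Icc (0 : ℝ) 1,
      (G t - G w) ^ 2 ≤ (∫ x in (0:ℝ)..1, g x ^ 2) * |t - w| := fun t ht => by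
    have hsub : ∀ s ∈ Icc (0 : ℝ) 1, uIcc 0 s ⊆ uIcc 0 1 := fun s hs =>
      (uIcc_subset_Icc (left_mem_Icc.2 zero_le_one) hs).trans Icc_subset_uIcc
    rw [hG, hG, intervalIntegral.integral_interval_sub_left (hgi.mono_set (hsub t ht))
      (hgi.mono_set (hsub w hw)), mul_comm]
    exact sq_intervalIntegral_le_abs_sub_mul_integral_sq hgi
      ((hg.pow 2).intervalIntegrable_of_Icc zero_le_one) hw ht
  have hE : 0 ≤ ∫ x in (0:ℝ)..1, g x ^ 2 :=
    intervalIntegral.integral_nonneg zero_le_one fun x _ => sq_nonneg (g x)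
  have hcube := cube_sub_le_of_sq_sub_le_mul_abs hGi hzmax hw hE hHolder
  have hmean : Gbar ≤ G z := by
    simpa [hGbar] using intervalIntegral_le_mul_of_forall_le zero_le_one hGi hzmax
  rw [← hGbar] at hcube
  refine ⟨z, hz, fun x hx => ?_⟩
  have hx3 : (Gbar - G x) ^ 3 ≤ (Gbar - G w) ^ 3 :=
    (Odd.pow_le_pow (by decide)).2 (sub_le_sub_left (hwmin hx) Gbar)
  rw [one_div_mul_eq_div]
  exact div_le_of_le_mul₀ (mul_nonneg (by norm_num) hE) (sub_nonneg.2 hmean) (by linarith)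

theorem stmt_11 (g : ℝ → ℝ) (hg : ContinuousOn g (Set.Icc (0 : ℝ) 1))
    (hne : ∃ x ∈ Set.Icc (0 : ℝ) 1, g x ≠ 0)
    (G : ℝ → ℝ) (hG : ∀ s, G s = ∫ x in (0:ℝ)..s, g x)
    (Gbar : ℝ) (hGbar : Gbar = ∫ x in (0:ℝ)..1, G x) :
    ∃ z ∈ Set.Icc (0 : ℝ) 1, ∀ x ∈ Set.Icc (0 : ℝ) 1,
      (1 / (8 * ∫ t in (0:ℝ)..1, (g t) ^ 2)) * (Gbar - G x) ^ 3
        ≤ G z - Gbar :=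
  stmt_11_general g hg G hG Gbar hGbar
end

section
/- Let (x_k)_{k=1}^{∞} be a sequence in [0,1] and n₀ ≥ 1 such that for every n ≥ n₀, the point x_{n+1} is a global minimizer over z ∈ [0,1] of z ↦ ∫₀¹ (#{1 ≤ k ≤ n : x_k ≤ y} + 1_{[z,1]}(y) − (n+1)y)² dy (a Kritzinger sequence with arbitrary initial segment x_1,…,x_{n₀}). Then there exists a constant c ≥ 0, depending only on the initial points x_1,…,x_{n₀}, such that for all n ≥ n₀, ∫₀¹ |#{1 ≤ k ≤ n : x_k ≤ x} − n·x|² dx ≤ n/3 + c. -/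
/-- The counting function of the first `n` terms (indexed `1,…,n`) of a sequence:
`#{1 ≤ k ≤ n : x_k ≤ y}`. -/
noncomputable def seqCount (x : ℕ → ℝ) (n : ℕ) (y : ℝ) : ℕ :=
  ((Finset.Icc 1 n).filter (fun k => x k ≤ y)).card

/-- `x` is a Kritzinger sequence with initial segment `x_1,…,x_{n₀}`: all terms lie
in `[0,1]` and, for every `n ≥ n₀`, the point `x_{n+1}` is a global minimizer over
`z ∈ [0,1]` of `z ↦ ∫₀¹ (#{1 ≤ k ≤ n : x_k ≤ y} + 1_{[z,1]}(y) − (n+1)y)² dy`. -/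
def IsKritzinger (x : ℕ → ℝ) (n₀ : ℕ) : Prop :=
  (∀ k, x k ∈ Set.Icc (0 : ℝ) 1) ∧
  ∀ n, n₀ ≤ n → ∀ z ∈ Set.Icc (0 : ℝ) 1,
    (∫ y in (0:ℝ)..1,
        ((seqCount x n y : ℝ) + (if x (n + 1) ≤ y then (1:ℝ) else 0)
          - ((n : ℝ) + 1) * y) ^ 2)
      ≤ ∫ y in (0:ℝ)..1,
          ((seqCount x n y : ℝ) + (if z ≤ y then (1:ℝ) else 0)
            - ((n : ℝ) + 1) * y) ^ 2

/-!
Write `A(y) = #{1 ≤ k ≤ n : x_k ≤ y} − n y`. Averaging the Kritzinger criterion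
`∫₀¹ (A(y) + 1_{[z,1]}(y) − y)² dy` over the candidate `z ∈ [0,1]` and swapping the integrals
turns the indicator into `y`, the cross terms cancel and what is left is `∫₀¹ A² + ∫₀¹ y(1 − y)`.
The minimizer `x_{n+1}` does no worse than this average, so the squared L² discrepancy grows by
at most `1/6` per step from `n₀` on, and `c` can be taken to be the discrepancy at `n₀`.
-/

open MeasureTheory Set

lemma ite_le_eq_indicator_Iic (y z : ℝ) :
    (if z ≤ y then (1:ℝ) else 0) = (Iic y).indicator 1 z := by
  simp [indicator_apply]

lemma integral_Ioc_ite_le {y : ℝ} (hy : y ∈ Icc (0:ℝ) 1) :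
    ∫ z in Ioc (0:ℝ) 1, (if z ≤ y then (1:ℝ) else 0) = y := by
  simp_rw [ite_le_eq_indicator_Iic, integral_indicator_one measurableSet_Iic,
    measureReal_restrict_apply measurableSet_Iic, Iic_inter_Ioc_of_le hy.2, Real.volume_real_Ioc,
    sub_zero, max_eq_left hy.1]

lemma integral_Ioc_sq_add_ite (a : ℝ) {y : ℝ} (hy : y ∈ Icc (0:ℝ) 1) :
    ∫ z in Ioc (0:ℝ) 1, (a + if z ≤ y then (1:ℝ) else 0) ^ 2 = a ^ 2 + (2 * a + 1) * y := by
  have hsq : ∀ z : ℝ, (a + if z ≤ y then (1:ℝ) else 0) ^ 2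
      = a ^ 2 + (2 * a + 1) * (if z ≤ y then (1:ℝ) else 0) := by
    intro z; split_ifs <;> ring
  have hint : IntegrableOn (fun z : ℝ => if z ≤ y then (1:ℝ) else 0) (Ioc 0 1) := by
    simp_rw [ite_le_eq_indicator_Iic]
    exact (integrableOn_const measure_Ioc_lt_top.ne).indicator measurableSet_Iic
  simp_rw [hsq]
  rw [integral_add (integrable_const _) (hint.const_mul _), integral_const_mul,
    integral_Ioc_ite_le hy]
  simp

section Averaging

variable {A : ℝ → ℝ} {C : ℝ}

lemma integrable_sq_add_ite_sub (hA : Measurable A) (hC : ∀ y ∈ Ioc (0:ℝ) 1, |A y| ≤ C) :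
    Integrable (Function.uncurry fun z y => (A y + (if z ≤ y then (1:ℝ) else 0) - y) ^ 2)
      ((volume.restrict (Ioc (0:ℝ) 1)).prod (volume.restrict (Ioc (0:ℝ) 1))) := by
  have hmeas :
      Measurable (Function.uncurry fun z y => (A y + (if z ≤ y then (1:ℝ) else 0) - y) ^ 2) :=
    (((hA.comp measurable_snd).add (Measurable.ite (measurableSet_le measurable_fst measurable_snd)
      measurable_const measurable_const)).sub measurable_snd).pow_const 2
  refine Integrable.of_bound hmeas.aestronglyMeasurable ((C + 2) ^ 2) ?_
  rw [Measure.prod_restrict]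
  filter_upwards [ae_restrict_mem (measurableSet_Ioc.prod measurableSet_Ioc)] with p hp
  obtain ⟨-, hy0, hy1⟩ := hp
  have hAy := abs_le.mp (hC p.2 ⟨hy0, hy1⟩)
  have hbound : |A p.2 + (if p.1 ≤ p.2 then (1:ℝ) else 0) - p.2| ≤ C + 2 := by
    rw [abs_le]; split_ifs <;> constructor <;> linarith
  rw [← Prod.mk.eta (p := p), Function.uncurry_apply_pair, norm_pow, Real.norm_eq_abs]
  exact pow_le_pow_left₀ (abs_nonneg _) hbound 2

lemma integral_Ioc_integral_Ioc_sq_add_ite_sub (hA : Measurable A)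
    (hC : ∀ y ∈ Ioc (0:ℝ) 1, |A y| ≤ C) :
    ∫ z in Ioc (0:ℝ) 1, ∫ y in Ioc (0:ℝ) 1, (A y + (if z ≤ y then (1:ℝ) else 0) - y) ^ 2
      = (∫ y in Ioc (0:ℝ) 1, A y ^ 2) + 1 / 6 := by
  have hinner : ∀ y ∈ Ioc (0:ℝ) 1, ∫ z in Ioc (0:ℝ) 1, (A y + (if z ≤ y then (1:ℝ) else 0) - y) ^ 2
      = A y ^ 2 + (y - y ^ 2) := by
    intro y hy
    simp_rw [add_sub_right_comm (A y)]
    rw [integral_Ioc_sq_add_ite _ (Ioc_subset_Icc_self hy)]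
    ring
  have hA2 : IntegrableOn (fun y => A y ^ 2) (Ioc (0:ℝ) 1) :=
    Integrable.of_bound (hA.pow_const 2).aestronglyMeasurable (C ^ 2) <| by
      filter_upwards [ae_restrict_mem measurableSet_Ioc] with y hy
      simpa only [norm_pow, Real.norm_eq_abs] using pow_le_pow_left₀ (abs_nonneg _) (hC y hy) 2
  have hpoly : ∫ y in Ioc (0:ℝ) 1, (y - y ^ 2) = 1 / 6 := by
    rw [← intervalIntegral.integral_of_le zero_le_one, intervalIntegral.integral_sub
      intervalIntegral.intervalIntegrable_id (intervalIntegral.intervalIntegrable_pow 2),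
      integral_id, integral_pow]
    norm_num
  rw [integral_integral_swap (integrable_sq_add_ite_sub hA hC),
    setIntegral_congr_fun measurableSet_Ioc hinner,
    integral_add hA2 (by fun_prop : Continuous fun y : ℝ => y - y ^ 2).integrableOn_Ioc, hpoly]

lemma exists_integral_sq_add_ite_sub_le (hA : Measurable A)
    (hC : ∀ y ∈ Ioc (0:ℝ) 1, |A y| ≤ C) :
    ∃ z ∈ Icc (0:ℝ) 1, ∫ y in (0:ℝ)..1, (A y + (if z ≤ y then (1:ℝ) else 0) - y) ^ 2
      ≤ (∫ y in (0:ℝ)..1, A y ^ 2) + 1 / 6 := by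
  have hvol : volume (Ioc (0:ℝ) 1) = 1 := by simp
  obtain ⟨z, hz, hle⟩ := exists_le_setAverage (by simp [hvol]) (by simp [hvol])
    (integrable_sq_add_ite_sub hA hC).integral_prod_left
  refine ⟨z, Ioc_subset_Icc_self hz, ?_⟩
  simp only [intervalIntegral.integral_of_le zero_le_one]
  rw [← integral_Ioc_integral_Ioc_sq_add_ite_sub hA hC]
  simpa [setAverage_eq, hvol] using hle

end Averaging

section SeqCount

variable (x : ℕ → ℝ) (n : ℕ)

lemma seqCount_succ (y : ℝ) :
    (seqCount x (n + 1) y : ℝ) = seqCount x n y + if x (n + 1) ≤ y then 1 else 0 := by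
  have hIcc : Finset.Icc 1 (n + 1) = insert (n + 1) (Finset.Icc 1 n) := by
    ext k; simp only [Finset.mem_Icc, Finset.mem_insert]; omega
  rw [seqCount, hIcc, Finset.filter_insert]
  split_ifs
  · rw [Finset.card_insert_of_notMem (by simp)]
    push_cast; rfl
  · simp [seqCount]

lemma monotone_seqCount : Monotone fun y => (seqCount x n y : ℝ) := fun _ _ hab =>
  Nat.cast_le.mpr <| Finset.card_le_card <|
    Finset.monotone_filter_right _ fun _ _ hk => hk.trans hab

lemma abs_seqCount_sub_le {y : ℝ} (hy : y ∈ Icc (0:ℝ) 1) :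
    |(seqCount x n y : ℝ) - n * y| ≤ n := by
  have hle : (seqCount x n y : ℝ) ≤ n := by
    have := (Finset.card_filter_le (Finset.Icc 1 n) fun k => x k ≤ y).trans_eq (Nat.card_Icc 1 n)
    exact_mod_cast this
  have hny : (n : ℝ) * y ≤ n := mul_le_of_le_one_right n.cast_nonneg hy.2
  rw [abs_le]; constructor <;> nlinarith [n.cast_nonneg (α := ℝ), hy.1]

end SeqCount

noncomputable def sqDiscrepancy (x : ℕ → ℝ) (n : ℕ) : ℝ :=
  ∫ y in (0:ℝ)..1, ((seqCount x n y : ℝ) - n * y) ^ 2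

lemma IsKritzinger.sqDiscrepancy_succ_le {x : ℕ → ℝ} {n₀ n : ℕ} (hK : IsKritzinger x n₀)
    (hn : n₀ ≤ n) : sqDiscrepancy x (n + 1) ≤ sqDiscrepancy x n + 1 / 6 := by
  obtain ⟨z, hz, hle⟩ :=
    exists_integral_sq_add_ite_sub_le (A := fun y => (seqCount x n y : ℝ) - n * y)
      ((monotone_seqCount x n).measurable.sub (measurable_const.mul measurable_id))
      (fun y hy => abs_seqCount_sub_le x n (Ioc_subset_Icc_self hy))
  calc sqDiscrepancy x (n + 1)
      = ∫ y in (0:ℝ)..1, ((seqCount x n y : ℝ) + (if x (n + 1) ≤ y then 1 else 0)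
          - ((n : ℝ) + 1) * y) ^ 2 := by
        simp only [sqDiscrepancy, seqCount_succ, Nat.cast_succ]
    _ ≤ ∫ y in (0:ℝ)..1, ((seqCount x n y : ℝ) + (if z ≤ y then 1 else 0)
          - ((n : ℝ) + 1) * y) ^ 2 := hK.2 n hn z hz
    _ = ∫ y in (0:ℝ)..1,
          ((seqCount x n y : ℝ) - n * y + (if z ≤ y then 1 else 0) - y) ^ 2 := by
        congr 1; ext y; ring
    _ ≤ sqDiscrepancy x n + 1 / 6 := hle

theorem stmt_14_general (x : ℕ → ℝ) (n₀ : ℕ)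
    (hK : IsKritzinger x n₀) :
    ∃ c : ℝ, 0 ≤ c ∧ ∀ n, n₀ ≤ n →
      (∫ y in (0:ℝ)..1, ((seqCount x n y : ℝ) - (n : ℝ) * y) ^ 2)
        ≤ (n : ℝ) / 3 + c := by
  refine ⟨sqDiscrepancy x n₀, intervalIntegral.integral_nonneg zero_le_one fun _ _ => sq_nonneg _,
    fun n hn => show sqDiscrepancy x n ≤ _ from ?_⟩
  induction n, hn using Nat.le_induction with
  | base => exact le_add_of_nonneg_left (by positivity)
  | succ n hn ih =>
    have := hK.sqDiscrepancy_succ_le hn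
    push_cast
    linarith

theorem stmt_14 (x : ℕ → ℝ) (n₀ : ℕ) (hn₀ : 1 ≤ n₀)
    (hK : IsKritzinger x n₀) :
    ∃ c : ℝ, 0 ≤ c ∧ ∀ n, n₀ ≤ n →
      (∫ y in (0:ℝ)..1, ((seqCount x n y : ℝ) - (n : ℝ) * y) ^ 2)
        ≤ (n : ℝ) / 3 + c :=
  stmt_14_general x n₀ hK
end
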